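/- arXiv:2011.00991 — 7 statements merged into one kernel-verified Lean document; each statement's English description precedes it below -/
import Mathlib

section
/- Let Q₁ and Q₂ be N×N complex matrices and p a complex scalar. Then the characteristic polynomial of the supra-Laplacian Q satisfies, for every λ, det(λ·I₂ₙ − Q) = det( (λ·I − (Q₁+Q₂)/2)·((λ−2p)·I − (Q₁+Q₂)/2) − ΔQ ), where ΔQ = ( (Q₁−Q₂)² − 2(Q₁Q₂ − Q₂Q₁) )/4. -/
/-!
The off-diagonal blocks of `λ I - Q` are the scalar matrices `p I`, which commute with everything,
so `det (λ I - Q) = det (A D - p² I)` with `A = (λ - p) I - Q₁` and `D = (λ - p) I - Q₂`, as for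
`2 × 2` matrices. Expanding `A D - p² I` around the mean `(Q₁ + Q₂) / 2` gives the stated product.
-/

open Matrix Polynomial

namespace Matrix

section Commute

variable {R n : Type*} [CommRing R] [Fintype n] [DecidableEq n]

theorem det_fromBlocks_mul_det_of_commute (A B C D : Matrix n n R) (hCD : Commute C D) :
    (fromBlocks A B C D).det * D.det = (A * D - B * C).det * D.det := by
  have hprod :
      fromBlocks A B C D * fromBlocks D 0 (-C) 1 = fromBlocks (A * D - B * C) B 0 D := by
    rw [fromBlocks_multiply, hCD.eq]
    simp [sub_eq_add_neg]
  simpa [det_fromBlocks_zero₁₂, det_fromBlocks_zero₂₁] using congrArg det hprod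

/-- Over `R[X]`, replacing `D` by `charmatrix (-D) = X • 1 + D` makes `det D` monic, hence
cancellable; evaluating at `X = 0` then recovers the identity over `R`. -/
theorem det_fromBlocks_of_commute (A B C D : Matrix n n R) (hCD : Commute C D) :
    (fromBlocks A B C D).det = (A * D - B * C).det := by
  let φ : Matrix n n R →+* Matrix n n R[X] := (Polynomial.C : R →+* R[X]).mapMatrix
  have hCD' : Commute (φ C) (charmatrix (-D)) :=
    ((scalar_commute (n := n) (X : R[X]) (fun _ => Commute.all _ _) _).symm).sub_right
      (hCD.neg_right.map φ)
  have hlift := (charpoly_monic (-D)).isRegular.right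
    (det_fromBlocks_mul_det_of_commute (φ A) (φ B) (φ C) _ hCD')
  have hev : ∀ M : Matrix n n R, (φ M).map (evalRingHom 0) = M := fun M => by
    ext; simp [φ]
  have hevD : (charmatrix (-D)).map (evalRingHom 0) = D := by
    ext i j; by_cases h : i = j <;> simp [h]
  have := congrArg (evalRingHom 0) hlift
  rw [RingHom.map_det, RingHom.map_det, map_sub, map_mul, map_mul, RingHom.mapMatrix_apply,
    fromBlocks_map] at this
  simpa only [RingHom.mapMatrix_apply, hev, hevD] using this

end Commute

theorem smul_one_sub_supraLaplacian_eq_fromBlocks {R n : Type*} [CommRing R] [DecidableEq n]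
    (Q1 Q2 : Matrix n n R) (p lam : R) :
    lam • (1 : Matrix (n ⊕ n) (n ⊕ n) R) -
        fromBlocks (Q1 + p • 1) (-(p • 1)) (-(p • 1)) (Q2 + p • 1) =
      fromBlocks ((lam - p) • 1 - Q1) (p • 1) (p • 1) ((lam - p) • 1 - Q2) := by
  rw [← fromBlocks_one, fromBlocks_smul, sub_eq_add_neg, fromBlocks_neg, fromBlocks_add]
  congr 1 <;> module

end Matrix

theorem shifted_mul_shifted_sub_sq_eq_mean_form {K A : Type*} [Field K] [CharZero K] [Ring A]
    [Algebra K A] (x y : A) (lam p : K) :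
    ((lam - p) • 1 - x) * ((lam - p) • 1 - y) - p • 1 * p • 1 =
      (lam • 1 - (1 / 2 : K) • (x + y)) * ((lam - 2 * p) • 1 - (1 / 2 : K) • (x + y)) -
        (1 / 4 : K) • ((x - y) ^ 2 - (2 : K) • (x * y - y * x)) := by
  simp only [pow_two, sub_mul, mul_sub, add_mul, mul_add, smul_mul_assoc, mul_smul_comm, one_mul,
    mul_one, smul_sub, smul_add]
  module

/-- Characteristic polynomial of the supra-Laplacian of a two-layer multiplex,
expressed via the Schur-complement-type identity of Eq. (4) of the paper. -/
theorem charpoly_supraLaplacian_schur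
    (N : ℕ) (Q1 Q2 : Matrix (Fin N) (Fin N) ℂ) (p : ℂ) (lam : ℂ) :
    Matrix.det
      (lam • (1 : Matrix (Fin N ⊕ Fin N) (Fin N ⊕ Fin N) ℂ) -
        Matrix.fromBlocks (Q1 + p • 1) (-(p • 1)) (-(p • 1)) (Q2 + p • 1)) =
    Matrix.det
      ((lam • (1 : Matrix (Fin N) (Fin N) ℂ) - (1 / 2 : ℂ) • (Q1 + Q2)) *
          ((lam - 2 * p) • (1 : Matrix (Fin N) (Fin N) ℂ) - (1 / 2 : ℂ) • (Q1 + Q2)) -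
        (1 / 4 : ℂ) • ((Q1 - Q2) ^ 2 - (2 : ℂ) • (Q1 * Q2 - Q2 * Q1))) := by
  rw [smul_one_sub_supraLaplacian_eq_fromBlocks,
    det_fromBlocks_of_commute _ _ _ _ ((Commute.one_left _).smul_left p),
    shifted_mul_shifted_sub_sq_eq_mean_form]
end

section
/- Let Q₁ and Q₂ be N×N matrices (over ℝ or ℂ) and p a scalar, and let T be the 2N×2N orthogonal matrix T = (1/√2)·[[I, I],[−I, I]]. Then T·Q·Tᵀ = Q̃, where Q̃ is the block matrix [[(Q₁+Q₂)/2, (Q₂−Q₁)/2], [(Q₂−Q₁)/2, (Q₁+Q₂)/2 + 2p·I]]; in particular Q and Q̃ are similar and have the same characteristic polynomial. -/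
open Matrix

namespace Matrix

variable {n R : Type*} [Fintype n] [DecidableEq n]

theorem charpoly_mul_mul_of_mul_eq_one [CommRing R] {P P' : Matrix n n R} (h : P * P' = 1)
    (A : Matrix n n R) : (P * A * P').charpoly = A.charpoly := by
  rw [charpoly_mul_comm, ← Matrix.mul_assoc, mul_eq_one_comm.mp h, Matrix.one_mul]

theorem fromBlocks_one_one_neg_one_one_conj [Ring R] (A B C D : Matrix n n R) :
    fromBlocks (1 : Matrix n n R) 1 (-1) 1 * fromBlocks A B C D *
        (fromBlocks (1 : Matrix n n R) 1 (-1) 1)ᵀ =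
      fromBlocks (A + B + C + D) (B + D - A - C) (C + D - A - B) (A + D - B - C) := by
  simp only [fromBlocks_transpose, transpose_one, transpose_neg, fromBlocks_multiply,
    Matrix.one_mul, Matrix.mul_one, Matrix.neg_mul, Matrix.mul_neg, fromBlocks_inj]
  refine ⟨?_, ?_, ?_, ?_⟩ <;> abel

theorem fromBlocks_one_one_neg_one_one_mul_transpose [Ring R] :
    fromBlocks (1 : Matrix n n R) 1 (-1) 1 * (fromBlocks (1 : Matrix n n R) 1 (-1) 1)ᵀ =
      (2 : R) • (1 : Matrix (n ⊕ n) (n ⊕ n) R) := by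
  rw [two_smul, ← fromBlocks_one, fromBlocks_add]
  simp only [fromBlocks_transpose, transpose_one, transpose_neg, fromBlocks_multiply,
    Matrix.mul_one, Matrix.mul_neg, neg_neg, neg_add_cancel, add_zero]

end Matrix

/-- The supra-Laplacian `Q` is conjugated by the orthogonal matrix
`T = (1/√2)·[[I, I],[−I, I]]` into the block matrix `Q̃` whose upper-left block is the
integrated Laplacian `(Q₁+Q₂)/2`; in particular `Q` and `Q̃` are similar and share the
same characteristic polynomial. -/
theorem supraLaplacian_similarity
    (N : ℕ) (Q1 Q2 : Matrix (Fin N) (Fin N) ℝ) (p : ℝ) :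
    ((Real.sqrt 2)⁻¹ •
        Matrix.fromBlocks (1 : Matrix (Fin N) (Fin N) ℝ) 1 (-1) 1) *
      Matrix.fromBlocks (Q1 + p • 1) (-(p • 1)) (-(p • 1)) (Q2 + p • 1) *
      ((Real.sqrt 2)⁻¹ •
        Matrix.fromBlocks (1 : Matrix (Fin N) (Fin N) ℝ) 1 (-1) 1)ᵀ =
      Matrix.fromBlocks ((1 / 2 : ℝ) • (Q1 + Q2)) ((1 / 2 : ℝ) • (Q2 - Q1))
        ((1 / 2 : ℝ) • (Q2 - Q1)) ((1 / 2 : ℝ) • (Q1 + Q2) + (2 * p) • 1) ∧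
    (Matrix.fromBlocks (Q1 + p • 1) (-(p • 1)) (-(p • 1)) (Q2 + p • 1)).charpoly =
      (Matrix.fromBlocks ((1 / 2 : ℝ) • (Q1 + Q2)) ((1 / 2 : ℝ) • (Q2 - Q1))
        ((1 / 2 : ℝ) • (Q2 - Q1)) ((1 / 2 : ℝ) • (Q1 + Q2) + (2 * p) • 1)).charpoly := by
  set T : Matrix (Fin N ⊕ Fin N) (Fin N ⊕ Fin N) ℝ :=
    (Real.sqrt 2)⁻¹ • Matrix.fromBlocks 1 1 (-1) 1 with hT
  have hs : (Real.sqrt 2)⁻¹ * (Real.sqrt 2)⁻¹ = 1 / 2 := by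
    rw [← mul_inv, Real.mul_self_sqrt zero_le_two, one_div]
  have horth : T * Tᵀ = 1 := by
    rw [hT, transpose_smul, Matrix.smul_mul, Matrix.mul_smul, smul_smul, hs,
      fromBlocks_one_one_neg_one_one_mul_transpose, smul_smul]
    norm_num
  have hconj : T * Matrix.fromBlocks (Q1 + p • 1) (-(p • 1)) (-(p • 1)) (Q2 + p • 1) * Tᵀ =
      Matrix.fromBlocks ((1 / 2 : ℝ) • (Q1 + Q2)) ((1 / 2 : ℝ) • (Q2 - Q1))
        ((1 / 2 : ℝ) • (Q2 - Q1)) ((1 / 2 : ℝ) • (Q1 + Q2) + (2 * p) • 1) := by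
    rw [hT, transpose_smul, Matrix.smul_mul, Matrix.smul_mul, Matrix.mul_smul, smul_smul, hs,
      fromBlocks_one_one_neg_one_one_conj, fromBlocks_smul, fromBlocks_inj]
    refine ⟨?_, ?_, ?_, ?_⟩ <;> module
  exact ⟨hconj, hconj ▸ (charpoly_mul_mul_of_mul_eq_one horth _).symm⟩
end

section
/- Let Q₁ and Q₂ be N×N real symmetric matrices (undirected layer Laplacians), let p ≥ 0 be real, and let Q be the supra-Laplacian, which is then real symmetric. Then the second smallest eigenvalue of Q is at most the second smallest eigenvalue of the integrated (aggregated) Laplacian (Q₁+Q₂)/2, i.e. λ₂(Q) ≤ λ₂((Q₁+Q₂)/2). Hence an undirected two-layer multiplex never diffuses faster than its aggregated network, regardless of the interlayer coupling strength p. -/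
open Matrix

/-- The multiset of real eigenvalues of a real square matrix (the real roots of its
characteristic polynomial, with multiplicity), sorted in non-decreasing order.
For a real symmetric matrix this lists all of its eigenvalues. -/
noncomputable def sortedEigenvalues {n : Type*} [Fintype n] [DecidableEq n]
    (M : Matrix n n ℝ) : List ℝ :=
  M.charpoly.roots.sort (· ≤ ·)

/-!
A vector `v` copied onto both layers does not feel the interlayer coupling:
`(v, v) ⬝ Q (v, v) = v ⬝ Q₁ v + v ⬝ Q₂ v = 2 (v ⬝ A v)` with `A = (Q₁ + Q₂)/2`, while
`(v, v) ⬝ (v, v) = 2 (v ⬝ v)`. Copying the span of the two lowest eigenvectors of `A` therefore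
gives a plane on which the Rayleigh quotient of `Q` is at most `λ₂(A)`, and the min-max principle
(the number of eigenvalues `≤ μ` is the largest dimension of a subspace on which the Rayleigh
quotient is `≤ μ`) yields `λ₂(Q) ≤ λ₂(A)`.
-/

theorem List.getD_le_iff_lt_countP {α : Type*} [Preorder α] [DecidableLE α] {l : List α}
    (hl : l.Pairwise (· ≤ ·)) {k : ℕ} (hk : k < l.length) (d c : α) :
    l.getD k d ≤ c ↔ k < l.countP (· ≤ c) := by
  induction l generalizing k with
  | nil => simp at hk
  | cons a t ih =>
    obtain ⟨ha, ht⟩ := List.pairwise_cons.mp hl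
    by_cases hac : a ≤ c
    · cases k with
      | zero => simp [hac]
      | succ k =>
        simp only [List.getD_cons_succ, List.countP_cons, hac, decide_true, if_true]
        rw [ih ht (by simpa using hk)]
        omega
    · have hgt : ∀ x ∈ a :: t, ¬ x ≤ c := by
        intro x hx h
        rcases List.mem_cons.mp hx with rfl | hx
        · exact hac h
        · exact hac ((ha x hx).trans h)
      have hget : (a :: t).getD k d ∈ a :: t := by
        rw [List.getD_eq_getElem _ _ hk]
        exact List.getElem_mem hk
      have hcount : (a :: t).countP (· ≤ c) = 0 :=
        List.countP_eq_zero.mpr fun x hx => by simpa using hgt x hx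
      rw [hcount]
      exact iff_of_false (hgt _ hget) (Nat.not_lt_zero k)

theorem OrthonormalBasis.sum_sq_dotProduct {n ι : Type*} [Fintype n] [Fintype ι]
    (b : OrthonormalBasis ι ℝ (EuclideanSpace ℝ n)) (x : n → ℝ) :
    ∑ i, (⇑(b i) ⬝ᵥ x) ^ 2 = x ⬝ᵥ x := by
  have := b.sum_inner_mul_inner (WithLp.toLp 2 x) (WithLp.toLp 2 x)
  simp only [EuclideanSpace.inner_eq_star_dotProduct, star_trivial] at this
  simpa [dotProduct_comm, sq] using this

namespace Matrix.IsHermitian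

open Finset

variable {n : Type*} [Fintype n] [DecidableEq n] {M : Matrix n n ℝ}

theorem dotProduct_mulVec_eq_sum (hM : M.IsHermitian) (x : n → ℝ) :
    x ⬝ᵥ (M *ᵥ x) = ∑ i, hM.eigenvalues i * (⇑(hM.eigenvectorBasis i) ⬝ᵥ x) ^ 2 := by
  have hcoord : ∀ i, ⇑(hM.eigenvectorBasis i) ⬝ᵥ (M *ᵥ x)
      = hM.eigenvalues i * (⇑(hM.eigenvectorBasis i) ⬝ᵥ x) := by
    intro i
    rw [dotProduct_mulVec, ← mulVec_transpose, ← conjTranspose_eq_transpose_of_trivial, hM.eq,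
      dotProduct_comm, hM.mulVec_eigenvectorBasis, dotProduct_smul, smul_eq_mul, dotProduct_comm]
  have := hM.eigenvectorBasis.sum_inner_mul_inner (WithLp.toLp 2 x) (WithLp.toLp 2 (M *ᵥ x))
  simp only [EuclideanSpace.inner_eq_star_dotProduct, star_trivial] at this
  rw [dotProduct_comm, ← this]
  refine sum_congr rfl fun i _ => ?_
  rw [dotProduct_comm (M *ᵥ x), hcoord]
  ring

theorem dotProduct_mulVec_le_of_forall_lt (hM : M.IsHermitian) {μ : ℝ} {x : n → ℝ}
    (hx : ∀ i, μ < hM.eigenvalues i → ⇑(hM.eigenvectorBasis i) ⬝ᵥ x = 0) :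
    x ⬝ᵥ (M *ᵥ x) ≤ μ * (x ⬝ᵥ x) := by
  rw [hM.dotProduct_mulVec_eq_sum, ← hM.eigenvectorBasis.sum_sq_dotProduct, mul_sum]
  refine sum_le_sum fun i _ => ?_
  rcases le_or_gt (hM.eigenvalues i) μ with hi | hi
  · exact mul_le_mul_of_nonneg_right hi (sq_nonneg _)
  · simp [hx i hi]

theorem lt_dotProduct_mulVec_of_forall_le (hM : M.IsHermitian) {μ : ℝ} {x : n → ℝ} (hx0 : x ≠ 0)
    (hx : ∀ i, hM.eigenvalues i ≤ μ → ⇑(hM.eigenvectorBasis i) ⬝ᵥ x = 0) :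
    μ * (x ⬝ᵥ x) < x ⬝ᵥ (M *ᵥ x) := by
  rw [hM.dotProduct_mulVec_eq_sum, ← hM.eigenvectorBasis.sum_sq_dotProduct, mul_sum]
  have hne : ∑ i, (⇑(hM.eigenvectorBasis i) ⬝ᵥ x) ^ 2 ≠ 0 := by
    rw [hM.eigenvectorBasis.sum_sq_dotProduct]
    exact fun h => hx0 (dotProduct_self_eq_zero.mp h)
  obtain ⟨j, -, hj⟩ := exists_ne_zero_of_sum_ne_zero hne
  have hμj : μ < hM.eigenvalues j := by
    by_contra! h
    simp [hx j h] at hj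
  refine sum_lt_sum (fun i _ => ?_) ⟨j, mem_univ j, ?_⟩
  · rcases le_or_gt (hM.eigenvalues i) μ with hi | hi
    · simp [hx i hi]
    · exact mul_le_mul_of_nonneg_right hi.le (sq_nonneg _)
  · exact mul_lt_mul_of_pos_right hμj (lt_of_le_of_ne (sq_nonneg _) (Ne.symm hj))

theorem finrank_le_card_eigenvalues_le (hM : M.IsHermitian) {μ : ℝ} (V : Submodule ℝ (n → ℝ))
    (hV : ∀ x ∈ V, x ⬝ᵥ (M *ᵥ x) ≤ μ * (x ⬝ᵥ x)) :
    Module.finrank ℝ V ≤ #{i | hM.eigenvalues i ≤ μ} := by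
  set S : Finset n := {i | hM.eigenvalues i ≤ μ}
  by_contra! hlt
  let coords : V →ₗ[ℝ] (S → ℝ) :=
    (Matrix.of fun (i : S) => ⇑(hM.eigenvectorBasis i)).mulVecLin ∘ₗ V.subtype
  have hker : LinearMap.ker coords ≠ ⊥ :=
    LinearMap.ker_ne_bot_of_finrank_lt (by simpa using hlt)
  obtain ⟨⟨x, hxV⟩, hx, hx0⟩ := Submodule.exists_mem_ne_zero_of_ne_bot hker
  have hxS : ∀ i, hM.eigenvalues i ≤ μ → ⇑(hM.eigenvectorBasis i) ⬝ᵥ x = 0 := fun i hi =>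
    congrFun (LinearMap.mem_ker.mp hx) ⟨i, by simpa [S] using hi⟩
  exact (hV x hxV).not_gt <| hM.lt_dotProduct_mulVec_of_forall_le (by simpa using hx0) hxS

theorem exists_finrank_eq_card_eigenvalues_le (hM : M.IsHermitian) (μ : ℝ) :
    ∃ V : Submodule ℝ (n → ℝ), Module.finrank ℝ V = #{i | hM.eigenvalues i ≤ μ} ∧
      ∀ x ∈ V, x ⬝ᵥ (M *ᵥ x) ≤ μ * (x ⬝ᵥ x) := by
  set S : Finset n := {i | hM.eigenvalues i ≤ μ}
  let v : S → n → ℝ := fun i => ⇑(hM.eigenvectorBasis i)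
  have hv : LinearIndependent ℝ v :=
    (hM.eigenvectorBasis.orthonormal.linearIndependent.map' _
      (WithLp.linearEquiv 2 ℝ (n → ℝ)).ker).comp _ Subtype.val_injective
  refine ⟨Submodule.span ℝ (Set.range v), by rw [finrank_span_eq_card hv, Fintype.card_coe], ?_⟩
  intro x hx
  refine hM.dotProduct_mulVec_le_of_forall_lt fun j hj => ?_
  induction hx using Submodule.span_induction with
  | mem y hy =>
    obtain ⟨i, rfl⟩ := hy
    have hij : (i : n) ≠ j := by
      rintro rfl
      exact (mem_filter.mp i.2).2.not_gt hj
    simpa [v, EuclideanSpace.inner_eq_star_dotProduct] using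
      hM.eigenvectorBasis.orthonormal.inner_eq_zero hij
  | zero => exact dotProduct_zero _
  | add y z _ _ hy hz => rw [dotProduct_add, hy, hz, add_zero]
  | smul c y _ hy => rw [dotProduct_smul, hy, smul_zero]

theorem sortedEigenvalues_getD_le_iff (hM : M.IsHermitian) {k : ℕ} (hk : k < Fintype.card n)
    (μ : ℝ) : (sortedEigenvalues M).getD k 0 ≤ μ ↔ k < #{i | hM.eigenvalues i ≤ μ} := by
  have hsorted : ((sortedEigenvalues M : List ℝ) : Multiset ℝ) = univ.val.map hM.eigenvalues := by
    rw [sortedEigenvalues, Multiset.sort_eq]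
    simpa using hM.roots_charpoly_eq_eigenvalues
  have hpair : (sortedEigenvalues M).Pairwise (· ≤ ·) := Multiset.pairwise_sort _ _
  rw [List.getD_le_iff_lt_countP hpair]
  · rw [← Multiset.coe_countP, hsorted, Multiset.countP_map, card_def, filter_val]
  · rw [← Multiset.coe_card, hsorted]
    simpa using hk

end Matrix.IsHermitian

open Finset in
theorem sortedEigenvalues_getD_le_of_dotProduct_mulVec_le {n m : Type*} [Fintype n]
    [DecidableEq n] [Fintype m] [DecidableEq m] {A : Matrix n n ℝ} {B : Matrix m m ℝ}
    (hA : A.IsHermitian) (hB : B.IsHermitian) (f : (n → ℝ) →ₗ[ℝ] (m → ℝ)) {c : ℝ} (hc : 0 < c)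
    (hf : ∀ x, f x ⬝ᵥ f x = c * (x ⬝ᵥ x)) (hfB : ∀ x, f x ⬝ᵥ (B *ᵥ f x) ≤ c * (x ⬝ᵥ (A *ᵥ x)))
    {k : ℕ} (hk : k < Fintype.card n) :
    (sortedEigenvalues B).getD k 0 ≤ (sortedEigenvalues A).getD k 0 := by
  set μ := (sortedEigenvalues A).getD k 0
  have hkA : k < #{i | hA.eigenvalues i ≤ μ} := (hA.sortedEigenvalues_getD_le_iff hk μ).mp le_rfl
  obtain ⟨V, hVdim, hV⟩ := hA.exists_finrank_eq_card_eigenvalues_le μ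
  have hf_inj : Function.Injective f := (injective_iff_map_eq_zero f).mpr fun x hx => by
    have hcx := hf x
    rw [hx, zero_dotProduct, zero_eq_mul] at hcx
    exact dotProduct_self_eq_zero.mp (hcx.resolve_left hc.ne')
  have hW : ∀ y ∈ V.map f, y ⬝ᵥ (B *ᵥ y) ≤ μ * (y ⬝ᵥ y) := by
    rintro _ ⟨x, hx, rfl⟩
    calc f x ⬝ᵥ (B *ᵥ f x) ≤ c * (x ⬝ᵥ (A *ᵥ x)) := hfB x
      _ ≤ c * (μ * (x ⬝ᵥ x)) := mul_le_mul_of_nonneg_left (hV x hx) hc.le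
      _ = μ * (f x ⬝ᵥ f x) := by rw [hf]; ring
  have hkB : k < #{i | hB.eigenvalues i ≤ μ} :=
    calc k < Module.finrank ℝ V := hVdim ▸ hkA
      _ = Module.finrank ℝ (V.map f) := (Submodule.equivMapOfInjective f hf_inj V).finrank_eq
      _ ≤ _ := hB.finrank_le_card_eigenvalues_le _ hW
  exact (hB.sortedEigenvalues_getD_le_iff (hkB.trans_le (card_le_univ _)) μ).mpr hkB

def supraLaplacian {R N : Type*} [Ring R] [DecidableEq N] (Q₁ Q₂ : Matrix N N R) (p : R) :
    Matrix (N ⊕ N) (N ⊕ N) R :=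
  fromBlocks (Q₁ + p • 1) (-(p • 1)) (-(p • 1)) (Q₂ + p • 1)

section supraLaplacian

variable {R N : Type*} [CommRing R] [DecidableEq N] {Q₁ Q₂ : Matrix N N R}

theorem isSymm_supraLaplacian (h₁ : Q₁.IsSymm) (h₂ : Q₂.IsSymm) (p : R) :
    (supraLaplacian Q₁ Q₂ p).IsSymm :=
  .fromBlocks (h₁.add (isSymm_one.smul p)) (by simp) (h₂.add (isSymm_one.smul p))

theorem supraLaplacian_mulVec_sumElim_self [Fintype N] (p : R) (v : N → R) :
    supraLaplacian Q₁ Q₂ p *ᵥ Sum.elim v v = Sum.elim (Q₁ *ᵥ v) (Q₂ *ᵥ v) := by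
  simp [supraLaplacian, fromBlocks_mulVec, add_mulVec, neg_mulVec, smul_mulVec]

end supraLaplacian

theorem undirected_multiplex_no_superdiffusion_general
    (N : ℕ) (hN : 2 ≤ N) (Q1 Q2 : Matrix (Fin N) (Fin N) ℝ)
    (h1 : Q1.IsSymm) (h2 : Q2.IsSymm) (p : ℝ) :
    (sortedEigenvalues
        (Matrix.fromBlocks (Q1 + p • 1) (-(p • 1)) (-(p • 1)) (Q2 + p • 1))).getD 1 0 ≤
      (sortedEigenvalues ((1 / 2 : ℝ) • (Q1 + Q2))).getD 1 0 := by
  have hQ : (supraLaplacian Q1 Q2 p).IsHermitian :=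
    isHermitian_iff_isSymm.mpr (isSymm_supraLaplacian h1 h2 p)
  have hA : ((1 / 2 : ℝ) • (Q1 + Q2)).IsHermitian := isHermitian_iff_isSymm.mpr ((h1.add h2).smul _)
  let duplicate : (Fin N → ℝ) →ₗ[ℝ] (Fin N ⊕ Fin N → ℝ) := LinearMap.funLeft ℝ ℝ (Sum.elim id id)
  have hduplicate : ∀ v, duplicate v = Sum.elim v v := fun v => Sum.comp_elim v id id
  refine sortedEigenvalues_getD_le_of_dotProduct_mulVec_le hA hQ duplicate two_pos
    (fun v => ?_) (fun v => le_of_eq ?_) (by rwa [Fintype.card_fin])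
  · rw [hduplicate, sumElim_dotProduct_sumElim]
    ring
  · rw [hduplicate, supraLaplacian_mulVec_sumElim_self, sumElim_dotProduct_sumElim, smul_mulVec,
      add_mulVec, dotProduct_smul, dotProduct_add, smul_eq_mul]
    ring

/-- For an undirected (symmetric) two-layer multiplex with nonnegative interlayer
coupling `p`, the second smallest eigenvalue of the supra-Laplacian never exceeds the
second smallest eigenvalue of the integrated Laplacian `(Q₁+Q₂)/2`: an undirected
multiplex never diffuses faster than its aggregated network. -/
theorem undirected_multiplex_no_superdiffusion
    (N : ℕ) (hN : 2 ≤ N) (Q1 Q2 : Matrix (Fin N) (Fin N) ℝ)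
    (h1 : Q1.IsSymm) (h2 : Q2.IsSymm) (p : ℝ) (hp : 0 ≤ p) :
    (sortedEigenvalues
        (Matrix.fromBlocks (Q1 + p • 1) (-(p • 1)) (-(p • 1)) (Q2 + p • 1))).getD 1 0 ≤
      (sortedEigenvalues ((1 / 2 : ℝ) • (Q1 + Q2))).getD 1 0 :=
  undirected_multiplex_no_superdiffusion_general N hN Q1 Q2 h1 h2 p
end

section
/- Let Q₁ be an N×N complex matrix, let p be a scalar, and let Q be the supra-Laplacian of the multiplex with two identical layers Q₂ = Q₁. Then the characteristic polynomial of Q factors as det(λ·I₂ₙ − Q) = det(λ·I − Q₁)·det((λ−2p)·I − Q₁); equivalently, the multiset of eigenvalues of Q is the union of the multiset of eigenvalues of Q₁ and the multiset of eigenvalues of Q₁ shifted by 2p. -/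
/-!
Conjugating `[[A, B], [B, A]]` by `[[1, 0], [1, 1]]` makes it block upper triangular with
diagonal blocks `A + B` (the in-phase modes) and `A - B` (the anti-phase modes). For the
two-layer supra-Laplacian `A = Q₁ + p I` and `B = -p I`, so these blocks are `Q₁` and
`Q₁ + 2p I`; shifting a matrix by `c I` shifts its characteristic polynomial, hence its
eigenvalues, by `c`.
-/

open Matrix Polynomial

theorem Polynomial.roots_comp_X_sub_C {R : Type*} [CommRing R] [IsDomain R] (f : R[X]) (c : R) :
    (f.comp (X - C c)).roots = f.roots.map (· + c) := by
  simpa [sub_eq_add_neg] using f.roots_comp_C_mul_X_add_C 1 (-c) isUnit_one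

namespace Matrix

variable {n R : Type*} [Fintype n] [DecidableEq n] [CommRing R]

theorem det_fromBlocks_self_swap (A B : Matrix n n R) :
    (fromBlocks A B B A).det = (A + B).det * (A - B).det := by
  have hfactor : fromBlocks A B B A =
      fromBlocks 1 0 1 1 * fromBlocks (A + B) B 0 (A - B) * fromBlocks 1 0 (-1) 1 := by
    simp [fromBlocks_multiply]
  rw [hfactor, det_mul, det_mul, det_fromBlocks_zero₁₂, det_fromBlocks_zero₁₂,
    det_fromBlocks_zero₂₁]
  simp

theorem charpoly_fromBlocks_self_swap (A B : Matrix n n R) :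
    (fromBlocks A B B A).charpoly = (A + B).charpoly * (A - B).charpoly := by
  rw [charpoly, charmatrix_fromBlocks, det_fromBlocks_self_swap, charpoly, charpoly]
  congr 2 <;> ext i j <;> by_cases h : i = j <;> simp [h] <;> ring

theorem charpoly_add_smul_one (M : Matrix n n R) (c : R) :
    (M + c • 1).charpoly = M.charpoly.comp (X - C c) := by
  simpa [sub_eq_add_neg, smul_one_eq_diagonal] using charpoly_sub_scalar M (-c)

theorem roots_charpoly_add_smul_one [IsDomain R] (M : Matrix n n R) (c : R) :
    (M + c • 1).charpoly.roots = M.charpoly.roots.map (· + c) := by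
  rw [charpoly_add_smul_one, roots_comp_X_sub_C]

end Matrix

/-- For a multiplex of two identical layers `Q₂ = Q₁`, the characteristic polynomial of
the supra-Laplacian factors as `det(λI − Q) = det(λI − Q₁) · det((λ−2p)I − Q₁)`;
equivalently, the eigenvalue multiset of `Q` is the union of the eigenvalue multiset of
`Q₁` and the eigenvalue multiset of `Q₁` shifted by `2p`. -/
theorem identical_layers_charpoly_factorization
    (N : ℕ) (Q1 : Matrix (Fin N) (Fin N) ℂ) (p : ℂ) :
    (∀ lam : ℂ,
      Matrix.det
        (lam • (1 : Matrix (Fin N ⊕ Fin N) (Fin N ⊕ Fin N) ℂ) -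
          Matrix.fromBlocks (Q1 + p • 1) (-(p • 1)) (-(p • 1)) (Q1 + p • 1)) =
      Matrix.det (lam • (1 : Matrix (Fin N) (Fin N) ℂ) - Q1) *
        Matrix.det ((lam - 2 * p) • (1 : Matrix (Fin N) (Fin N) ℂ) - Q1)) ∧
    (Matrix.fromBlocks (Q1 + p • 1) (-(p • 1)) (-(p • 1)) (Q1 + p • 1)).charpoly.roots =
      Q1.charpoly.roots + Q1.charpoly.roots.map (fun μ => μ + 2 * p) := by
  have hcharpoly : (fromBlocks (Q1 + p • 1) (-(p • 1)) (-(p • 1)) (Q1 + p • 1)).charpoly =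
      Q1.charpoly * (Q1 + (2 * p) • 1).charpoly := by
    rw [charpoly_fromBlocks_self_swap, two_mul, add_smul]
    congr 2 <;> abel
  refine ⟨fun lam => ?_, ?_⟩
  · have hshift : (lam - 2 * p) • (1 : Matrix (Fin N) (Fin N) ℂ) - Q1 =
        lam • 1 - (Q1 + (2 * p) • 1) := by
      rw [sub_smul]; abel
    have heval := congrArg (eval lam) hcharpoly
    rw [eval_mul, eval_charpoly, eval_charpoly, eval_charpoly] at heval
    rw [hshift]
    simpa only [scalar_apply, smul_one_eq_diagonal] using heval
  · rw [hcharpoly, roots_mul (mul_ne_zero (charpoly_monic _).ne_zero (charpoly_monic _).ne_zero),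
      roots_charpoly_add_smul_one]
end

section
/- Let X be an n×n complex matrix with eigenvalues λ₁,…,λₙ (with multiplicity), and let μ₁ ≤ … ≤ μₙ be the eigenvalues of the Hermitian part Re X = (X + Xᴴ)/2. Then for every k with 1 ≤ k ≤ n, the sum of the k largest values among Re λ₁,…,Re λₙ is at most μ_{n−k+1} + … + μₙ, the sum of the k largest eigenvalues of Re X. Moreover, the total sums agree: Σⱼ Re λⱼ = Σⱼ μⱼ (both equal Re tr X). -/
/-!
By Schur triangularization, `X` is upper triangular in some orthonormal basis `b`, so its
eigenvalues are the diagonal entries `⟪b i, X b i⟫`, whose real parts are the diagonal entries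
`⟪b i, H b i⟫` of the Hermitian part `H`. The `k` largest real parts are therefore a sum of `k`
diagonal entries of `H` in an orthonormal basis. Expanding in an eigenbasis of `H` writes such a
sum as `∑ⱼ μⱼ cⱼ` with weights `0 ≤ cⱼ ≤ 1` (Bessel) of total mass `k` (Parseval), and such a
combination of the eigenvalues is at most the sum of the `k` largest ones (Ky Fan). The equality
of the total sums is the equality of the real parts of the traces.
-/

open Matrix

/-- The real parts of the eigenvalues of an `n×n` complex matrix `X`, sorted in
non-decreasing order (eigenvalues are the roots of the characteristic polynomial,
with multiplicity). -/
noncomputable def sortedReParts {n : ℕ} (X : Matrix (Fin n) (Fin n) ℂ) : List ℝ :=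
  ((X.charpoly.roots).map Complex.re).sort (· ≤ ·)

open Finset Module

theorem Multiset.sum_drop_sort_eq_sum_take_sort_ge {α : Type*} [LinearOrder α] [AddCommMonoid α]
    (s : Multiset α) (k : ℕ) :
    ((s.sort (· ≤ ·)).drop (card s - k)).sum = ((s.sort (· ≥ ·)).take k).sum := by
  have hrev : (s.sort (· ≤ ·)).reverse = s.sort (· ≥ ·) :=
    List.Perm.eq_of_sortedGE (List.sortedGE_reverse.mpr (s.pairwise_sort _).sortedLE)
      (s.pairwise_sort _).sortedGE
      ((List.reverse_perm _).trans (Multiset.coe_eq_coe.mp (by rw [sort_eq, sort_eq])))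
  rw [← hrev, List.take_reverse, List.sum_reverse, Multiset.length_sort]

theorem Multiset.exists_le_map_eq_of_le_map {α β : Type*} {f : α → β} {s : Multiset α}
    {t : Multiset β} (h : t ≤ s.map f) : ∃ u ≤ s, u.map f = t := by
  induction s using Quotient.inductionOn with | h l => ?_
  induction t using Quotient.inductionOn with | h m => ?_
  obtain ⟨m', hperm, hsub⟩ := Multiset.coe_le.mp h
  obtain ⟨l', hl', rfl⟩ := List.sublist_map_iff.mp hsub
  exact ⟨l', Multiset.coe_le.mpr hl'.subperm, Multiset.coe_eq_coe.mpr hperm⟩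

theorem Finset.exists_card_eq_sum_take_sort_map_univ_eq {ι M : Type*} [Fintype ι] [LinearOrder M]
    [AddCommMonoid M] (f : ι → M) {k : ℕ} (hk : k ≤ Fintype.card ι) :
    ∃ S : Finset ι, #S = k ∧ (((univ.val.map f).sort (· ≥ ·)).take k).sum = ∑ i ∈ S, f i := by
  have hle : ((((univ.val.map f).sort (· ≥ ·)).take k : List M) : Multiset M) ≤ univ.val.map f := by
    simpa using Multiset.coe_le.mpr (List.take_sublist k ((univ.val.map f).sort (· ≥ ·))).subperm
  obtain ⟨u, hu, hmap⟩ := Multiset.exists_le_map_eq_of_le_map hle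
  refine ⟨⟨u, Multiset.nodup_of_le hu univ.nodup⟩, ?_, ?_⟩
  · simpa [hk] using congrArg Multiset.card hmap
  · rw [← Multiset.sum_coe, ← hmap]
    rfl

theorem Antitone.sum_mul_le_sum_val_lt {n k : ℕ} {f c : Fin n → ℝ} (hf : Antitone f)
    (hc₀ : ∀ j, 0 ≤ c j) (hc₁ : ∀ j, c j ≤ 1) (hc : ∑ j, c j = k) :
    ∑ j, f j * c j ≤ ∑ j with j.val < k, f j := by
  obtain rfl | hk := Nat.eq_zero_or_pos k
  · have hc_zero : ∀ j, c j = 0 := fun j ↦ (sum_eq_zero_iff_of_nonneg fun j _ ↦ hc₀ j).mp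
      (by exact_mod_cast hc) j (mem_univ j)
    simp [hc_zero]
  have hkn : k ≤ n := by
    have : ∑ j, c j ≤ ∑ _j : Fin n, (1 : ℝ) := sum_le_sum fun j _ ↦ hc₁ j
    simp only [hc, sum_const, card_univ, Fintype.card_fin, nsmul_eq_mul, mul_one] at this
    exact_mod_cast this
  -- Compare `c` with the indicator `e` of the first `k` indices, around the threshold `f (k - 1)`.
  set t := f ⟨k - 1, by omega⟩
  set e : Fin n → ℝ := fun j ↦ if j.val < k then 1 else 0
  have he : ∑ j, e j = k := by simp [e, Fin.card_filter_val_lt, hkn]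
  have hfe : ∑ j, f j * e j = ∑ j with j.val < k, f j := by simp [e, sum_ite]
  have hterm : ∀ j, (f j - t) * (c j - e j) ≤ 0 := by
    intro j
    by_cases hj : j.val < k
    · exact mul_nonpos_of_nonneg_of_nonpos (sub_nonneg.mpr (hf (Fin.mk_le_mk.mpr (by omega))))
        (by simp [e, hj, hc₁ j])
    · exact mul_nonpos_of_nonpos_of_nonneg (sub_nonpos.mpr (hf (Fin.mk_le_mk.mpr (by omega))))
        (by simp [e, hj, hc₀ j])
  have hsum : ∑ j, (f j - t) * (c j - e j) =
      ∑ j, f j * c j - ∑ j, f j * e j - t * (∑ j, c j - ∑ j, e j) := by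
    simp only [sub_mul, mul_sub, sum_sub_distrib, mul_sum]
    ring
  have := sum_nonpos fun j (_ : j ∈ univ) ↦ hterm j
  rw [hsum, hc, he, hfe] at this
  linarith

theorem Orthonormal.snoc {𝕜 E : Type*} [RCLike 𝕜] [NormedAddCommGroup E] [InnerProductSpace 𝕜 E]
    {n : ℕ} {v : Fin n → E} (hv : Orthonormal 𝕜 v) {u : E} (hu : ‖u‖ = 1)
    (hvu : ∀ i, inner 𝕜 (v i) u = 0) : Orthonormal 𝕜 (Fin.snoc v u : Fin (n + 1) → E) := by
  rw [orthonormal_iff_ite] at hv ⊢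
  intro i j
  induction i using Fin.lastCases <;> induction j using Fin.lastCases <;>
    simp [hv, hvu, inner_self_eq_norm_sq_to_K, hu, Fin.castSucc_ne_last,
      (Fin.castSucc_ne_last _).symm, ← inner_conj_symm (𝕜 := 𝕜) u]

namespace LinearMap

theorem exists_orthonormalBasis_inner_apply_eq_zero_of_lt {E : Type*}
    [NormedAddCommGroup E] [InnerProductSpace ℂ E] [FiniteDimensional ℂ E] {n : ℕ}
    (hn : finrank ℂ E = n) (T : E →ₗ[ℂ] E) :
    ∃ b : OrthonormalBasis (Fin n) ℂ E, ∀ i j, j < i → inner ℂ (b i) (T (b j)) = 0 := by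
  induction n generalizing E with
  | zero => exact ⟨(stdOrthonormalBasis ℂ E).reindex (finCongr hn), fun i ↦ i.elim0⟩
  | succ n ih =>
    have : Nontrivial E := Module.nontrivial_of_finrank_eq_succ hn
    obtain ⟨μ, hμ⟩ := Module.End.exists_eigenvalue (adjoint T)
    obtain ⟨w, hw⟩ := hμ.exists_hasEigenvector
    -- The orthogonal complement `K` of an eigenvector `w` of `T†` is `T`-invariant, so a
    -- triangularizing basis of `K` followed by `w / ‖w‖` triangularizes `T`.
    set K := (ℂ ∙ w)ᗮ
    have hK : ∀ x ∈ K, T x ∈ K := by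
      intro x hx
      rw [Submodule.mem_orthogonal_singleton_iff_inner_right] at hx ⊢
      rw [← adjoint_inner_left, hw.apply_eq_smul, inner_smul_left, hx, mul_zero]
    have hKn : finrank ℂ K = n :=
      have : Fact (finrank ℂ E = n + 1) := ⟨hn⟩
      Submodule.finrank_orthogonal_span_singleton hw.2
    obtain ⟨b', hb'⟩ := ih hKn (T.restrict hK)
    set u : E := (‖w‖⁻¹ : ℂ) • w
    have hu : ‖u‖ = 1 := by simp [u, norm_smul, hw.2]
    have hKu : ∀ x ∈ K, inner ℂ x u = 0 := fun x hx ↦ by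
      rw [inner_smul_right, inner_eq_zero_symm.mp
        (Submodule.mem_orthogonal_singleton_iff_inner_right.mp hx), mul_zero]
    have hv : Orthonormal ℂ (Fin.snoc (fun i ↦ (b' i : E)) u : Fin (n + 1) → E) :=
      (b'.orthonormal.comp_linearIsometry K.subtypeₗᵢ).snoc hu fun i ↦ hKu _ (b' i).2
    let b := OrthonormalBasis.mk hv
      (hv.linearIndependent.span_eq_top_of_card_eq_finrank' (by simp [hn])).ge
    refine ⟨b, fun i j hji ↦ ?_⟩
    induction j using Fin.lastCases with
    | last => exact absurd hji (not_lt.mpr (Fin.le_last i))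
    | cast j =>
      induction i using Fin.lastCases with
      | last =>
        simp only [b, OrthonormalBasis.coe_mk, Fin.snoc_last, Fin.snoc_castSucc]
        exact inner_eq_zero_symm.mp (hKu _ (hK _ (b' j).2))
      | cast i =>
        simp only [b, OrthonormalBasis.coe_mk, Fin.snoc_castSucc]
        simpa [Submodule.coe_inner] using hb' i j (Fin.castSucc_lt_castSucc_iff.mp hji)

variable {𝕜 E : Type*} [RCLike 𝕜] [NormedAddCommGroup E] [InnerProductSpace 𝕜 E]
  [FiniteDimensional 𝕜 E]

theorem roots_charpoly_eq_of_inner_apply_eq_zero_of_lt {n : ℕ} {T : E →ₗ[𝕜] E}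
    (b : OrthonormalBasis (Fin n) 𝕜 E) (hb : ∀ i j, j < i → inner 𝕜 (b i) (T (b j)) = 0) :
    T.charpoly.roots = univ.val.map fun i ↦ inner 𝕜 (b i) (T (b i)) := by
  have hM : ∀ i j, T.toMatrix b.toBasis b.toBasis i j = inner 𝕜 (b i) (T (b j)) := by
    simp [toMatrix_apply, b.repr_apply_apply]
  rw [← T.charpoly_toMatrix b.toBasis,
    Matrix.charpoly_of_isUpperTriangular _ fun i j hji ↦ (hM i j).trans (hb i j hji),
    Polynomial.roots_prod _ _ (prod_ne_zero_iff.mpr fun i _ ↦ Polynomial.X_sub_C_ne_zero _)]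
  simp [hM]

theorem re_inner_half_smul_add_adjoint_apply_self (A : E →ₗ[𝕜] E) (x : E) :
    RCLike.re (inner 𝕜 x (((1 / 2 : 𝕜) • (A + A.adjoint)) x)) = RCLike.re (inner 𝕜 x (A x)) := by
  have h : inner 𝕜 x (((1 / 2 : 𝕜) • (A + A.adjoint)) x) = (RCLike.re (inner 𝕜 x (A x)) : 𝕜) := by
    rw [smul_apply, add_apply, inner_smul_right, inner_add_right, adjoint_inner_right,
      ← inner_conj_symm (A x) x, RCLike.add_conj]
    ring
  rw [h, RCLike.ofReal_re]

theorem isSymmetric_half_smul_add_adjoint (A : E →ₗ[𝕜] E) :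
    ((1 / 2 : 𝕜) • (A + A.adjoint)).IsSymmetric := by
  intro x y
  simp only [smul_apply, add_apply, inner_smul_left, inner_smul_right, inner_add_left,
    inner_add_right, adjoint_inner_left, adjoint_inner_right, one_div, map_inv₀, map_ofNat]
  ring

namespace IsSymmetric

variable {T : E →ₗ[𝕜] E} (hT : T.IsSymmetric) {n : ℕ} (hn : finrank 𝕜 E = n)
include hT hn

theorem re_inner_apply_self_eq_sum_eigenvalues (x : E) :
    RCLike.re (inner 𝕜 x (T x)) =
      ∑ j, hT.eigenvalues hn j * ‖inner 𝕜 (hT.eigenvectorBasis hn j) x‖ ^ 2 := by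
  set e := hT.eigenvectorBasis hn
  have he : ∀ j, inner 𝕜 (e j) (T x) = hT.eigenvalues hn j * inner 𝕜 (e j) x := fun j ↦ by
    rw [← e.repr_apply_apply, ← e.repr_apply_apply]
    exact hT.eigenvectorBasis_apply_self_apply hn x j
  rw [← e.sum_inner_mul_inner x (T x), map_sum]
  refine sum_congr rfl fun j _ ↦ ?_
  rw [he, ← inner_conj_symm, mul_left_comm, RCLike.conj_mul, ← RCLike.ofReal_pow,
    ← RCLike.ofReal_mul, RCLike.ofReal_re]

theorem sum_re_inner_le_sum_eigenvalues {ι : Type*} {v : ι → E} (hv : Orthonormal 𝕜 v)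
    (s : Finset ι) :
    ∑ i ∈ s, RCLike.re (inner 𝕜 (v i) (T (v i))) ≤ ∑ j with j.val < #s, hT.eigenvalues hn j := by
  set e := hT.eigenvectorBasis hn
  set c : Fin n → ℝ := fun j ↦ ∑ i ∈ s, ‖inner 𝕜 (e j) (v i)‖ ^ 2
  have hc₁ : ∀ j, c j ≤ 1 := fun j ↦ by
    simpa [c, norm_inner_symm, e.orthonormal.1 j] using hv.sum_inner_products_le (e j) (s := s)
  have hc : ∑ j, c j = #s := by
    simp [c, sum_comm (s := univ), e.sum_sq_norm_inner_right, hv.1]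
  calc ∑ i ∈ s, RCLike.re (inner 𝕜 (v i) (T (v i)))
      = ∑ j, hT.eigenvalues hn j * c j := by
        simp only [hT.re_inner_apply_self_eq_sum_eigenvalues hn, c, mul_sum]
        exact sum_comm
    _ ≤ ∑ j with j.val < #s, hT.eigenvalues hn j :=
        (hT.eigenvalues_antitone hn).sum_mul_le_sum_val_lt (fun j ↦ by positivity) hc₁ hc

end IsSymmetric

end LinearMap

namespace Matrix

theorem charpoly_toEuclideanLin {𝕜 n : Type*} [RCLike 𝕜] [Fintype n] [DecidableEq n]
    (A : Matrix n n 𝕜) : (toEuclideanLin A).charpoly = A.charpoly := by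
  rw [toEuclideanLin_eq_toLin_orthonormal, charpoly_toLin]

theorem toEuclideanLin_half_smul_add_conjTranspose {𝕜 n : Type*} [RCLike 𝕜] [Fintype n]
    [DecidableEq n] (A : Matrix n n 𝕜) :
    toEuclideanLin ((1 / 2 : 𝕜) • (A + Aᴴ)) =
      (1 / 2 : 𝕜) • (toEuclideanLin A + (toEuclideanLin A).adjoint) := by
  rw [map_smul, map_add, toEuclideanLin_conjTranspose_eq_adjoint]

theorem re_trace_half_smul_add_conjTranspose {n : Type*} [Fintype n] (X : Matrix n n ℂ) :
    (trace ((1 / 2 : ℂ) • (X + Xᴴ))).re = (trace X).re := by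
  rw [trace_smul, trace_add, trace_conjTranspose, smul_eq_mul, Complex.star_def, Complex.add_conj]
  simp

end Matrix

theorem sum_sortedReParts {n : ℕ} (X : Matrix (Fin n) (Fin n) ℂ) :
    (sortedReParts X).sum = (trace X).re := by
  rw [sortedReParts, ← Multiset.sum_coe, Multiset.sort_eq, trace_eq_sum_roots_charpoly]
  exact (map_multiset_sum Complex.reAddGroupHom _).symm

theorem sum_drop_sortedReParts {n : ℕ} (X : Matrix (Fin n) (Fin n) ℂ) (k : ℕ) :
    ((sortedReParts X).drop (n - k)).sum =
      (((X.charpoly.roots.map Complex.re).sort (· ≥ ·)).take k).sum := by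
  have hcard : Multiset.card (X.charpoly.roots.map Complex.re) = n := by
    rw [Multiset.card_map, IsAlgClosed.card_roots_eq_natDegree, charpoly_natDegree_eq_dim,
      Fintype.card_fin]
  have h := Multiset.sum_drop_sort_eq_sum_take_sort_ge (X.charpoly.roots.map Complex.re) k
  rwa [hcard] at h

/-- Ky Fan-type majorization: for every `1 ≤ k ≤ n`, the sum of the `k` largest real parts
of the eigenvalues of `X` is at most the sum of the `k` largest eigenvalues of the
Hermitian part `Re X = (X + Xᴴ)/2` (whose eigenvalues are real, hence recovered as the
real parts of its characteristic roots); moreover the total sums agree. -/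
theorem kyFan_majorization_reParts
    (n : ℕ) (X : Matrix (Fin n) (Fin n) ℂ) :
    (∀ k : ℕ, 1 ≤ k → k ≤ n →
      ((sortedReParts X).drop (n - k)).sum ≤
        ((sortedReParts ((1 / 2 : ℂ) • (X + Xᴴ))).drop (n - k)).sum) ∧
    ((sortedReParts X).sum = (sortedReParts ((1 / 2 : ℂ) • (X + Xᴴ))).sum ∧
      (sortedReParts X).sum = (Matrix.trace X).re) := by
  refine ⟨fun k _ hkn ↦ ?_, by rw [sum_sortedReParts, sum_sortedReParts,
    re_trace_half_smul_add_conjTranspose], sum_sortedReParts X⟩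
  set A := toEuclideanLin X
  have hT := A.isSymmetric_half_smul_add_adjoint
  have hn : finrank ℂ (EuclideanSpace ℂ (Fin n)) = n := finrank_euclideanSpace_fin
  obtain ⟨b, hb⟩ := A.exists_orthonormalBasis_inner_apply_eq_zero_of_lt hn
  have hroots : X.charpoly.roots = univ.val.map fun i ↦ inner ℂ (b i) (A (b i)) := by
    rw [← charpoly_toEuclideanLin]
    exact LinearMap.roots_charpoly_eq_of_inner_apply_eq_zero_of_lt b hb
  obtain ⟨S, hS, hsum⟩ :=
    exists_card_eq_sum_take_sort_map_univ_eq (fun i ↦ (inner ℂ (b i) (A (b i))).re)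
      (by simpa using hkn)
  calc ((sortedReParts X).drop (n - k)).sum
      = ∑ i ∈ S, RCLike.re (inner ℂ (b i) (((1 / 2 : ℂ) • (A + A.adjoint)) (b i))) := by
        simp only [sum_drop_sortedReParts, hroots, Multiset.map_map, Function.comp_def, hsum,
          LinearMap.re_inner_half_smul_add_adjoint_apply_self]
        rfl
    _ ≤ ∑ j with j.val < k, hT.eigenvalues hn j :=
        hS ▸ hT.sum_re_inner_le_sum_eigenvalues hn b.orthonormal S
    _ = ((sortedReParts ((1 / 2 : ℂ) • (X + Xᴴ))).drop (n - k)).sum := by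
        rw [sum_drop_sortedReParts, ← List.sum_take_ofFn,
          ← hT.sort_roots_charpoly_eq_eigenvalues hn,
          ← toEuclideanLin_half_smul_add_conjTranspose, charpoly_toEuclideanLin]
        rfl
end

section
/- Let X be an n×n complex matrix (n ≥ 2) such that 0 is an eigenvalue of X and the Hermitian part Re X = (X + Xᴴ)/2 is positive semidefinite with smallest eigenvalue 0. Then the second smallest element of the multiset of real parts of the eigenvalues of X is greater than or equal to the second smallest eigenvalue of Re X; i.e., Reλ₂(X) ≥ λ₂(Re X). -/
open Matrix
open scoped ComplexOrder

/-- The second smallest element of a multiset of real numbers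
(the second entry of the multiset sorted in non-decreasing order). -/
noncomputable def secondSmallest (s : Multiset ℝ) : ℝ :=
  (s.sort (· ≤ ·)).getD 1 0

/-!
A null vector `v` of `X` is also a null vector of `Re X`, since `Re X ⪰ 0` and
`v* (Re X) v = Re (v* X v) = 0`. Conjugating by a unitary whose first column is along `v`
therefore deflates `X` to `0 ⊕ B` and `Re X` to `0 ⊕ Re B`, so the spectra are `{0} ∪ σ(B)` and
`{0} ∪ σ(Re B)`. By Bendixson's inequality every eigenvalue of `B` has real part at least
`λ_min(Re B) ≥ 0`, so `Reλ₂(X) = min Re σ(B) ≥ λ_min(Re B) = λ₂(Re X)`.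
-/

theorem secondSmallest_le_of_two_le_card_filter {s : Multiset ℝ} {c : ℝ}
    (h : 2 ≤ (s.filter (· ≤ c)).card) : secondSmallest s ≤ c := by
  have hsorted := Multiset.pairwise_sort s (· ≤ ·)
  have hcard := h.trans (Multiset.card_le_card (Multiset.filter_le _ _))
  rw [← Multiset.sort_eq s (· ≤ ·)] at h hcard
  unfold secondSmallest
  generalize s.sort (· ≤ ·) = l at h hcard hsorted
  match l, hcard, h, hsorted with
  | [], hcard, _, _ | [_], hcard, _, _ => simp at hcard
  | a :: b :: t, _, h, hsorted =>
    simp only [List.getD_cons_succ, List.getD_cons_zero]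
    by_contra! hcb
    have ht : t.filter (· ≤ c) = [] := List.filter_eq_nil_iff.mpr fun x hx => by
      simpa using hcb.trans_le ((List.pairwise_cons.mp hsorted.of_cons).1 x hx)
    simp only [Multiset.filter_coe, Multiset.coe_card, List.filter_cons, ht,
      decide_eq_true_eq, hcb.not_ge, if_false] at h
    split_ifs at h <;> simp at h

theorem le_secondSmallest_of_card_filter_lt_le_one {s : Multiset ℝ} {c : ℝ}
    (hs : 2 ≤ s.card) (h : (s.filter (· < c)).card ≤ 1) : c ≤ secondSmallest s := by
  have hsorted := Multiset.pairwise_sort s (· ≤ ·)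
  rw [← Multiset.sort_eq s (· ≤ ·)] at h hs
  unfold secondSmallest
  generalize s.sort (· ≤ ·) = l at h hs hsorted
  match l, hs, h, hsorted with
  | [], hs, _, _ | [_], hs, _, _ => simp at hs
  | a :: b :: t, _, h, hsorted =>
    simp only [List.getD_cons_succ, List.getD_cons_zero]
    by_contra! hbc
    have hac : a < c := ((List.pairwise_cons.mp hsorted).1 b (by simp)).trans_lt hbc
    simp [hac, hbc] at h

theorem secondSmallest_cons_le_secondSmallest_cons {a c : ℝ} {s t : Multiset ℝ} (hac : a ≤ c)
    (hct : c ∈ t) (hs : s ≠ 0) (hcs : ∀ x ∈ s, c ≤ x) :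
    secondSmallest (a ::ₘ t) ≤ secondSmallest (a ::ₘ s) := by
  refine (secondSmallest_le_of_two_le_card_filter (c := c) ?_).trans
    (le_secondSmallest_of_card_filter_lt_le_one ?_ ?_)
  · have : 0 < (t.filter (· ≤ c)).card :=
      Multiset.card_pos_iff_exists_mem.mpr ⟨c, Multiset.mem_filter.mpr ⟨hct, le_rfl⟩⟩
    rw [Multiset.filter_cons, if_pos hac, Multiset.card_add, Multiset.card_singleton]
    omega
  · have := Multiset.card_pos.mpr hs
    rw [Multiset.card_cons]
    omega
  · have : s.filter (· < c) = 0 := Multiset.filter_eq_nil.mpr fun x hx => (hcs x hx).not_gt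
    rw [Multiset.filter_cons, this]
    split_ifs <;> simp

namespace Matrix

open Polynomial

theorem charmatrix_submatrix {R m n : Type*} [CommRing R] [Fintype m] [Fintype n]
    [DecidableEq m] [DecidableEq n] (M : Matrix n n R) {f : m → n} (hf : Function.Injective f) :
    charmatrix (M.submatrix f f) = (charmatrix M).submatrix f f := by
  ext i j : 1
  by_cases h : i = j
  · simp [h]
  · simp [h, hf.ne h]

theorem charpoly_eq_X_mul_charpoly_submatrix_succ {R : Type*} [CommRing R] {m : ℕ}
    {M : Matrix (Fin (m + 1)) (Fin (m + 1)) R} (hM : ∀ i, M i 0 = 0) :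
    M.charpoly = X * (M.submatrix Fin.succ Fin.succ).charpoly := by
  rw [charpoly, det_succ_column_zero, Fin.sum_univ_succ, Finset.sum_eq_zero]
  · simp [hM, charpoly, charmatrix_submatrix _ (Fin.succ_injective m)]
  · intro i _
    simp [hM]

theorem roots_charpoly_eq_zero_cons {K : Type*} [Field K] {m : ℕ}
    {M : Matrix (Fin (m + 1)) (Fin (m + 1)) K} (hM : ∀ i, M i 0 = 0) :
    M.charpoly.roots = 0 ::ₘ (M.submatrix Fin.succ Fin.succ).charpoly.roots := by
  rw [charpoly_eq_X_mul_charpoly_submatrix_succ hM,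
    roots_mul (mul_ne_zero X_ne_zero (charpoly_monic _).ne_zero), roots_X, Multiset.singleton_add]

theorem exists_mulVec_eq_smul_of_mem_roots_charpoly {K n : Type*} [Field K] [Fintype n]
    [DecidableEq n] {A : Matrix n n K} {μ : K} (hμ : μ ∈ A.charpoly.roots) :
    ∃ v ≠ 0, A *ᵥ v = μ • v := by
  have : Module.End.HasEigenvalue (toLin' A) μ := by
    rw [Module.End.hasEigenvalue_iff_isRoot_charpoly, charpoly_toLin']
    exact (mem_roots'.mp hμ).2
  obtain ⟨v, hv⟩ := this.exists_hasEigenvector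
  exact ⟨v, hv.2, by simpa using hv.apply_eq_smul⟩

theorem exists_mem_unitaryGroup_apply_eq {𝕜 ι : Type*} [RCLike 𝕜] [Fintype ι] [DecidableEq ι]
    (i₀ : ι) {u : EuclideanSpace 𝕜 ι} (hu : ‖u‖ = 1) :
    ∃ U ∈ unitaryGroup ι 𝕜, ∀ i, U i i₀ = u i := by
  have hortho : Orthonormal 𝕜 (({i₀} : Set ι).domRestrict fun _ => u) := by
    rw [orthonormal_iff_ite]
    rintro ⟨i, rfl⟩ ⟨j, rfl⟩
    simp [Set.domRestrict, inner_self_eq_norm_sq_to_K, hu]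
  obtain ⟨b, hb⟩ := hortho.exists_orthonormalBasis_extension_of_card_eq (by simp)
  refine ⟨(EuclideanSpace.basisFun ι 𝕜).toBasis.toMatrix b,
    OrthonormalBasis.toMatrix_orthonormalBasis_mem_unitary _ _, fun i => ?_⟩
  simp [Module.Basis.toMatrix_apply, hb i₀ rfl]

theorem conjTranspose_mul_mul_apply_eq_zero {R ι : Type*} [CommRing R] [StarRing R] [Fintype ι]
    {U M : Matrix ι ι R} {u : ι → R} {i₀ : ι} (hU : ∀ i, U i i₀ = u i) (hM : M *ᵥ u = 0)
    (i : ι) : (Uᴴ * M * U) i i₀ = 0 := by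
  have hcol : (fun k => U k i₀) = u := funext hU
  calc (Uᴴ * M * U) i i₀ = (Uᴴ *ᵥ (M *ᵥ u)) i := by rw [← hcol, mulVec_mulVec]; rfl
    _ = 0 := by simp [hM]

theorem IsHermitian.posSemidef_sub_smul_one {𝕜 n : Type*} [RCLike 𝕜] [Fintype n] [DecidableEq n]
    {A : Matrix n n 𝕜} (hA : A.IsHermitian) {c : ℝ} (hc : ∀ i, c ≤ hA.eigenvalues i) :
    (A - (c : 𝕜) • 1).PosSemidef := by
  rw [posSemidef_iff_isHermitian_and_spectrum_nonneg]
  refine ⟨hA.sub (by simp [IsHermitian, conjTranspose_smul]), ?_⟩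
  rw [← Algebra.algebraMap_eq_smul_one, ← spectrum.sub_singleton_eq, hA.spectrum_eq_image_range]
  rintro _ ⟨_, ⟨_, ⟨i, rfl⟩, rfl⟩, _, rfl, rfl⟩
  simpa [sub_nonneg] using hc i

theorem le_re_of_mem_roots_charpoly {n : Type*} [Fintype n] [DecidableEq n]
    {B : Matrix n n ℂ} {c : ℝ} (hc : ((1 / 2 : ℂ) • (B + Bᴴ) - (c : ℂ) • 1).PosSemidef)
    {ρ : ℂ} (hρ : ρ ∈ B.charpoly.roots) : c ≤ ρ.re := by
  obtain ⟨w, hw0, hw⟩ := exists_mulVec_eq_smul_of_mem_roots_charpoly hρ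
  have hBw : star w ⬝ᵥ (B *ᵥ w) = ρ * (star w ⬝ᵥ w) := by
    rw [hw, dotProduct_smul, smul_eq_mul]
  have hBHw : star w ⬝ᵥ (Bᴴ *ᵥ w) = star ρ * (star w ⬝ᵥ w) := by
    rw [dotProduct_mulVec, ← star_mulVec, hw, star_smul, smul_dotProduct, smul_eq_mul]
  have hquad : star w ⬝ᵥ (((1 / 2 : ℂ) • (B + Bᴴ) - (c : ℂ) • 1) *ᵥ w)
      = ((ρ.re - c : ℝ) : ℂ) * (star w ⬝ᵥ w) := by
    rw [sub_mulVec, smul_mulVec, add_mulVec, smul_mulVec, one_mulVec, dotProduct_sub,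
      dotProduct_smul, dotProduct_add, hBw, hBHw, dotProduct_smul, smul_eq_mul, smul_eq_mul,
      ← add_mul, Complex.star_def, Complex.add_conj]
    push_cast
    ring
  have hpos : 0 < star w ⬝ᵥ w := dotProduct_star_self_pos_iff.mpr hw0
  have hnonneg := hc.re_dotProduct_nonneg w
  rw [hquad, RCLike.re_to_complex, Complex.re_ofReal_mul] at hnonneg
  exact sub_nonneg.mp (nonneg_of_mul_nonneg_left hnonneg (Complex.pos_iff.mp hpos).1)

theorem mulVec_eq_zero_of_posSemidef_hermitianPart {n : Type*} [Fintype n] {X : Matrix n n ℂ}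
    (hX : ((1 / 2 : ℂ) • (X + Xᴴ)).PosSemidef) {v : n → ℂ} (hv : X *ᵥ v = 0) :
    ((1 / 2 : ℂ) • (X + Xᴴ)) *ᵥ v = 0 := by
  rw [← hX.dotProduct_mulVec_zero_iff, smul_mulVec, add_mulVec, hv, zero_add, dotProduct_smul,
    dotProduct_mulVec, ← star_mulVec, hv]
  simp

theorem exists_roots_charpoly_eq_zero_cons_of_mulVec_eq_zero {m : ℕ}
    {X : Matrix (Fin (m + 1)) (Fin (m + 1)) ℂ} (hX : ((1 / 2 : ℂ) • (X + Xᴴ)).PosSemidef)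
    {v : Fin (m + 1) → ℂ} (hv0 : v ≠ 0) (hv : X *ᵥ v = 0) :
    ∃ B : Matrix (Fin m) (Fin m) ℂ, ((1 / 2 : ℂ) • (B + Bᴴ)).PosSemidef ∧
      X.charpoly.roots = 0 ::ₘ B.charpoly.roots ∧
      ((1 / 2 : ℂ) • (X + Xᴴ)).charpoly.roots = 0 ::ₘ ((1 / 2 : ℂ) • (B + Bᴴ)).charpoly.roots := by
  set x : EuclideanSpace ℂ (Fin (m + 1)) := WithLp.toLp 2 v
  obtain ⟨U, hU, hUx⟩ := exists_mem_unitaryGroup_apply_eq 0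
    (norm_smul_inv_norm (𝕜 := ℂ) (x := x) (by simpa [x] using hv0))
  have hcol {M : Matrix (Fin (m + 1)) (Fin (m + 1)) ℂ} (hM : M *ᵥ v = 0) (i : Fin (m + 1)) :
      (Uᴴ * M * U) i 0 = 0 :=
    conjTranspose_mul_mul_apply_eq_zero hUx (by simp [x, mulVec_smul, hM]) i
  have hconj (M : Matrix (Fin (m + 1)) (Fin (m + 1)) ℂ) : (Uᴴ * M * U).charpoly = M.charpoly := by
    rw [charpoly_mul_comm, ← mul_assoc, ← star_eq_conjTranspose, mem_unitaryGroup_iff.mp hU,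
      one_mul]
  have hre : Uᴴ * ((1 / 2 : ℂ) • (X + Xᴴ)) * U
      = (1 / 2 : ℂ) • (Uᴴ * X * U + (Uᴴ * X * U)ᴴ) := by
    simp [conjTranspose_mul, Matrix.mul_add, Matrix.add_mul, Matrix.mul_assoc]
  set B := (Uᴴ * X * U).submatrix Fin.succ Fin.succ
  have hsub : (Uᴴ * ((1 / 2 : ℂ) • (X + Xᴴ)) * U).submatrix Fin.succ Fin.succ
      = (1 / 2 : ℂ) • (B + Bᴴ) := by
    rw [hre, conjTranspose_submatrix]
    rfl
  refine ⟨B, ?_, ?_, ?_⟩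
  · rw [← hsub]
    exact (hX.conjTranspose_mul_mul_same U).submatrix Fin.succ
  · rw [← hconj, roots_charpoly_eq_zero_cons (hcol hv)]
  · rw [← hconj, ← hsub,
      roots_charpoly_eq_zero_cons (hcol (mulVec_eq_zero_of_posSemidef_hermitianPart hX hv))]

end Matrix

theorem reLambda2_ge_lambda2_hermitianPart_general
    (n : ℕ) (hn : 2 ≤ n) (X : Matrix (Fin n) (Fin n) ℂ)
    (h0 : (0 : ℂ) ∈ X.charpoly.roots)
    (hpsd : ((1 / 2 : ℂ) • (X + Xᴴ)).PosSemidef) :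
    secondSmallest ((X.charpoly.roots).map Complex.re) ≥
      secondSmallest ((((1 / 2 : ℂ) • (X + Xᴴ)).charpoly.roots).map Complex.re) := by
  obtain ⟨m, rfl⟩ : ∃ m, n = m + 1 := ⟨n - 1, by omega⟩
  obtain ⟨v, hv0, hv⟩ := exists_mulVec_eq_smul_of_mem_roots_charpoly h0
  rw [zero_smul] at hv
  obtain ⟨B, hB, hXroots, hHroots⟩ :=
    exists_roots_charpoly_eq_zero_cons_of_mulVec_eq_zero hpsd hv0 hv
  obtain ⟨k, -, hk⟩ := Finset.univ.exists_min_image hB.isHermitian.eigenvalues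
    ⟨⟨0, by omega⟩, Finset.mem_univ _⟩
  rw [hXroots, hHroots, hB.isHermitian.roots_charpoly_eq_eigenvalues]
  simp only [Multiset.map_cons, Multiset.map_map, Complex.zero_re]
  refine secondSmallest_cons_le_secondSmallest_cons (hB.eigenvalues_nonneg k)
    (Multiset.mem_map_of_mem _ (Finset.mem_univ_val k)) ?_ ?_
  · rw [← Multiset.card_pos, Multiset.card_map, IsAlgClosed.card_roots_eq_natDegree,
      charpoly_natDegree_eq_dim, Fintype.card_fin]
    omega
  · simp only [Multiset.forall_mem_map_iff]
    intro ρ hρ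
    exact le_re_of_mem_roots_charpoly
      (hB.isHermitian.posSemidef_sub_smul_one fun i => hk i (Finset.mem_univ i)) hρ

/-- If `0` is an eigenvalue of `X` and the Hermitian part `Re X = (X + Xᴴ)/2` is positive
semidefinite with smallest eigenvalue `0`, then the second smallest real part of the
eigenvalues of `X` is at least the second smallest eigenvalue of `Re X` (the eigenvalues
of the Hermitian matrix `Re X` are real, hence recovered as the real parts of its
characteristic roots). -/
theorem reLambda2_ge_lambda2_hermitianPart
    (n : ℕ) (hn : 2 ≤ n) (X : Matrix (Fin n) (Fin n) ℂ)
    (h0 : (0 : ℂ) ∈ X.charpoly.roots)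
    (hpsd : ((1 / 2 : ℂ) • (X + Xᴴ)).PosSemidef)
    (h0' : (0 : ℂ) ∈ ((1 / 2 : ℂ) • (X + Xᴴ)).charpoly.roots) :
    secondSmallest ((X.charpoly.roots).map Complex.re) ≥
      secondSmallest ((((1 / 2 : ℂ) • (X + Xᴴ)).charpoly.roots).map Complex.re) :=
  reLambda2_ge_lambda2_hermitianPart_general n hn X h0 hpsd
end

section
/- Let N ≥ 2 and, for i, j ∈ {0,…,N−1}, let d(i→j) := (j − i) mod N be the directed shortest-path distance in the directed N-cycle. Then the network directionality index of the directed N-cycle equals (N−2)/(N−1) if N is even and (N−1)/N if N is odd; in particular, NDI < 1 for every directed cycle, so the network directionality index of a directed cycle is normalized below 1. -/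
/-
For `i ≠ j` the two distances `d(i→j)` and `d(j→i)` add up to `N`, so the pair contributes
`|2 d(i→j) - N|` to the numerator and `N / 2` to the denominator. Both summands are symmetric in
`i, j`, so a sum over `i < j` is half the sum over all ordered pairs, up to the diagonal; and by
rotation invariance every row `j ↦ d(i→j)` is a permutation of `0, …, N - 1`. Hence
`NDI = 2 (T N - N) / (N (N - 1))` with `T N = ∑_{k < N} |2k - N|`, and the recursion
`T (n + 2) = T n + 2 (n + 1)` gives `T (2m) = 2m²` and `T (2m + 1) = 2m² + 2m + 1`.
-/

open Finset

theorem Finset.sum_sum_eq_two_nsmul_sum_sum_lt_add_sum_diag {α M : Type*} [Fintype α]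
    [LinearOrder α] [AddCommMonoid M] {F : α → α → M} (hF : ∀ i j, F i j = F j i) :
    ∑ i, ∑ j, F i j = 2 • ∑ i, ∑ j ∈ univ.filter (fun j => i < j), F i j + ∑ i, F i i := by
  have hsplit : ∀ i j, F i j = ((if i < j then F i j else 0) + if j < i then F j i else 0) +
      if i = j then F i j else 0 := by
    intro i j
    rcases lt_trichotomy i j with h | rfl | h
    · simp [h, h.ne, h.not_gt]
    · simp
    · simp [h, h.ne', h.not_gt, hF i j]
  rw [sum_congr rfl fun i _ => sum_congr rfl fun j _ => hsplit i j]
  simp only [sum_add_distrib, sum_ite_eq, mem_univ, if_true, ← sum_filter]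
  have hswap : ∑ i, ∑ j ∈ univ.filter (· < i), F j i = ∑ j, ∑ i ∈ univ.filter (j < ·), F j i :=
    sum_comm' (by simp)
  rw [hswap, two_nsmul]

theorem Finset.sum_range_natCast_id {K : Type*} [Field K] [CharZero K] (n : ℕ) :
    ∑ k ∈ range n, (k : K) = n * (n - 1) / 2 := by
  induction n with
  | zero => simp
  | succ n ih =>
    rw [sum_range_succ, ih]
    push_cast
    ring

section AbsSum

variable {K : Type*} [CommRing K] [LinearOrder K] [IsStrictOrderedRing K]

theorem sum_range_abs_two_mul_sub_add_two (n : ℕ) :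
    ∑ k ∈ range (n + 2), |2 * (k : K) - (n + 2 : ℕ)| =
      ∑ k ∈ range n, |2 * (k : K) - n| + 2 * (n + 1) := by
  rw [sum_range_succ', sum_range_succ]
  have hshift : ∀ k : ℕ, |2 * ((k + 1 : ℕ) : K) - (n + 2 : ℕ)| = |2 * (k : K) - n| := by
    intro k
    push_cast
    ring_nf
  simp only [hshift]
  push_cast
  rw [show 2 * (n : K) - n = n by ring, show 2 * 0 - ((n : K) + 2) = -(n + 2) by ring, abs_neg,
    abs_of_nonneg (by positivity : (0 : K) ≤ n), abs_of_nonneg (by positivity : (0 : K) ≤ n + 2)]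
  ring

theorem sum_range_abs_two_mul_sub_of_even (m : ℕ) :
    ∑ k ∈ range (2 * m), |2 * (k : K) - (2 * m : ℕ)| = 2 * m ^ 2 := by
  induction m with
  | zero => simp
  | succ m ih =>
    rw [show 2 * (m + 1) = 2 * m + 2 by ring, sum_range_abs_two_mul_sub_add_two, ih]
    push_cast
    ring

theorem sum_range_abs_two_mul_sub_of_odd (m : ℕ) :
    ∑ k ∈ range (2 * m + 1), |2 * (k : K) - (2 * m + 1 : ℕ)| = 2 * m ^ 2 + 2 * m + 1 := by
  induction m with
  | zero => simp
  | succ m ih =>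
    rw [show 2 * (m + 1) + 1 = 2 * m + 1 + 2 by ring, sum_range_abs_two_mul_sub_add_two, ih]
    push_cast
    ring

end AbsSum

section CycleDist

variable {N : ℕ}

def cycleDist (i j : Fin N) : ℕ := (j - i : Fin N)

theorem cycleDist_eq (i j : Fin N) : cycleDist i j = (j + N - i) % N := by
  rw [cycleDist, Fin.val_sub]
  congr 1
  omega

variable [NeZero N]

@[simp]
theorem cycleDist_self (i : Fin N) : cycleDist i i = 0 := by
  simp [cycleDist]

theorem cycleDist_add_cycleDist_swap {i j : Fin N} (h : i ≠ j) :
    cycleDist i j + cycleDist j i = N := by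
  rw [cycleDist, cycleDist, ← neg_sub j i, Fin.val_neg, if_neg (sub_ne_zero.2 h.symm)]
  have := (j - i).isLt
  omega

theorem sum_comp_cycleDist {M : Type*} [AddCommMonoid M] (f : ℕ → M) (i : Fin N) :
    ∑ j, f (cycleDist i j) = ∑ k ∈ range N, f k :=
  (Fintype.sum_equiv (Equiv.subRight i) _ (fun j => f j) fun _ => rfl).trans
    (Fin.sum_univ_eq_sum_range f N)

theorem abs_cycleDist_sub_cycleDist_swap (i j : Fin N) :
    |(cycleDist i j : ℝ) - cycleDist j i| =
      |2 * (cycleDist i j : ℝ) - N| - if i = j then (N : ℝ) else 0 := by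
  by_cases h : i = j
  · subst h
    simp
  · have hswap : (cycleDist j i : ℝ) = N - cycleDist i j := by
      rw [eq_sub_iff_add_eq, add_comm]
      exact_mod_cast cycleDist_add_cycleDist_swap h
    rw [hswap, if_neg h, sub_zero]
    ring_nf

theorem sum_abs_cycleDist_sub_cycleDist_swap (i : Fin N) :
    ∑ j, |(cycleDist i j : ℝ) - cycleDist j i| = ∑ k ∈ range N, |2 * (k : ℝ) - N| - N := by
  simp only [abs_cycleDist_sub_cycleDist_swap, sum_sub_distrib, sum_ite_eq, mem_univ, if_true]
  rw [sum_comp_cycleDist fun k => |2 * (k : ℝ) - N|]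

theorem sum_filter_lt_abs_cycleDist_sub_cycleDist_swap :
    ∑ i : Fin N, ∑ j ∈ univ.filter (fun j => i < j), |(cycleDist i j : ℝ) - cycleDist j i| =
      N * (∑ k ∈ range N, |2 * (k : ℝ) - N| - N) / 2 := by
  have h := sum_sum_eq_two_nsmul_sum_sum_lt_add_sum_diag
    (F := fun i j : Fin N => |(cycleDist i j : ℝ) - cycleDist j i|) fun i j => abs_sub_comm _ _
  simp only [sum_abs_cycleDist_sub_cycleDist_swap, sum_const, card_univ, Fintype.card_fin,
    sub_self, abs_zero, nsmul_eq_mul] at h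
  push_cast at h
  linarith

theorem sum_filter_lt_cycleDist_add_cycleDist_swap_div_two :
    ∑ i : Fin N, ∑ j ∈ univ.filter (fun j => i < j), ((cycleDist i j : ℝ) + cycleDist j i) / 2 =
      N * (N * (N - 1) / 2) / 2 := by
  have h := sum_sum_eq_two_nsmul_sum_sum_lt_add_sum_diag
    (F := fun i j : Fin N => ((cycleDist i j : ℝ) + cycleDist j i) / 2) fun i j => by rw [add_comm]
  have hsymm : ∑ i : Fin N, ∑ j, ((cycleDist i j : ℝ) + cycleDist j i) / 2 =
      ∑ i : Fin N, ∑ j, (cycleDist i j : ℝ) := by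
    simp only [add_div, sum_add_distrib]
    rw [sum_comm (f := fun i j => (cycleDist j i : ℝ) / 2)]
    simp only [← sum_add_distrib, add_halves]
  rw [hsymm] at h
  simp only [sum_comp_cycleDist (fun k => (k : ℝ)), sum_range_natCast_id, sum_const, card_univ,
    Fintype.card_fin, cycleDist_self, CharP.cast_eq_zero, add_zero, zero_div, nsmul_eq_mul] at h
  push_cast at h
  linarith

end CycleDist

noncomputable def cycleNDI (N : ℕ) : ℝ :=
  (∑ i : Fin N, ∑ j ∈ univ.filter (fun j => i < j), |(cycleDist i j : ℝ) - cycleDist j i|) /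
    ∑ i : Fin N, ∑ j ∈ univ.filter (fun j => i < j), ((cycleDist i j : ℝ) + cycleDist j i) / 2

theorem cycleNDI_eq (N : ℕ) [NeZero N] :
    cycleNDI N =
      N * (∑ k ∈ range N, |2 * (k : ℝ) - N| - N) / 2 / (N * (N * (N - 1) / 2) / 2) := by
  rw [cycleNDI, sum_filter_lt_abs_cycleDist_sub_cycleDist_swap,
    sum_filter_lt_cycleDist_add_cycleDist_swap_div_two]

theorem cycleNDI_two_mul {m : ℕ} (hm : m ≠ 0) :
    cycleNDI (2 * m) = (((2 * m : ℕ) : ℝ) - 2) / (((2 * m : ℕ) : ℝ) - 1) := by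
  have : NeZero (2 * m) := ⟨by omega⟩
  have hm₁ : (1 : ℝ) ≤ m := mod_cast Nat.one_le_iff_ne_zero.mpr hm
  have hm₂ : 2 * (m : ℝ) - 1 ≠ 0 := by linarith
  rw [cycleNDI_eq, sum_range_abs_two_mul_sub_of_even]
  push_cast
  field_simp

theorem cycleNDI_two_mul_add_one {m : ℕ} (hm : m ≠ 0) :
    cycleNDI (2 * m + 1) = (((2 * m + 1 : ℕ) : ℝ) - 1) / ((2 * m + 1 : ℕ) : ℝ) := by
  rw [cycleNDI_eq, sum_range_abs_two_mul_sub_of_odd]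
  push_cast
  field_simp
  ring

/-- The network directionality index of the directed `N`-cycle (with directed
shortest-path distance `d(i→j) = (j − i) mod N`) equals `(N−2)/(N−1)` for even `N`
and `(N−1)/N` for odd `N`; in particular it is always strictly below `1`. -/
theorem ndi_directed_cycle_value
    (N : ℕ) (hN : 2 ≤ N)
    (d : Fin N → Fin N → ℕ) (hd : ∀ i j, d i j = (j.val + N - i.val) % N)
    (NDI : ℝ)
    (hNDI : NDI =
      (∑ i : Fin N, ∑ j ∈ Finset.univ.filter (fun j => i < j),
          |(d i j : ℝ) - (d j i : ℝ)|) /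
        (∑ i : Fin N, ∑ j ∈ Finset.univ.filter (fun j => i < j),
          ((d i j : ℝ) + (d j i : ℝ)) / 2)) :
    (Even N → NDI = ((N : ℝ) - 2) / ((N : ℝ) - 1)) ∧
    (Odd N → NDI = ((N : ℝ) - 1) / (N : ℝ)) ∧
    NDI < 1 := by
  obtain rfl : d = cycleDist := funext₂ fun i j => (hd i j).trans (cycleDist_eq i j).symm
  replace hNDI : NDI = cycleNDI N := hNDI
  have heven : Even N → NDI = ((N : ℝ) - 2) / ((N : ℝ) - 1) := by
    intro he
    obtain ⟨m, rfl⟩ := even_iff_two_dvd.mp he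
    rw [hNDI, cycleNDI_two_mul (by omega)]
  have hodd : Odd N → NDI = ((N : ℝ) - 1) / (N : ℝ) := by
    rintro ⟨m, rfl⟩
    rw [hNDI, cycleNDI_two_mul_add_one (by omega)]
  have hN' : (2 : ℝ) ≤ N := by exact_mod_cast hN
  refine ⟨heven, hodd, ?_⟩
  rcases N.even_or_odd with he | ho
  · rw [heven he, div_lt_one (by linarith)]
    linarith
  · rw [hodd ho, div_lt_one (by linarith)]
    linarith
end
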